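/- arXiv:2511.10449 — 8 statements merged into one kernel-verified Lean document; each statement's English description precedes it below -/
import Mathlib

section
/- For any theory T of unimodal S4F (formulas built with the single modality K), the map that sends an S4F structure M = (V, W, ξ) to the S4F standpoint structure (Π, σ, τ, γ) over standpoint names S = {*} given by Π := V ∪ W, σ(*) := W, τ(*) := V, γ := ξ, is a bijection between the set of S4F structures satisfying T and the set of S4F standpoint structures satisfying T[K/□_*], the theory obtained from T by replacing every occurrence of K with □_*. -/
/-- Formulas of S4F standpoint logic over atoms `A` and standpoint names `S`. -/
inductive SForm (A S : Type) : Type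
  | atom : A → SForm A S
  | neg  : SForm A S → SForm A S
  | and  : SForm A S → SForm A S → SForm A S
  | box  : S → SForm A S → SForm A S

/-- Expressions: formulas or sharpening statements `s ≼ u`. -/
inductive SExpr (A S : Type) : Type
  | form  : SForm A S → SExpr A S
  | sharp : S → S → SExpr A S

/-- S4F standpoint structures over a carrier type `P` of precisifications. -/
structure SFFS (A S P : Type) (star : S) where
  Pi : Set P
  sig : S → Set P
  tau : S → Set P
  val : P → Set A
  nonempty_Pi : Pi.Nonempty
  sig_sub : ∀ s, sig s ⊆ Pi
  tau_sub : ∀ s, tau s ⊆ Pi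
  star_union : sig star ∪ tau star = Pi
  sig_nonempty : ∀ s, (sig s).Nonempty
  sig_tau_disj : ∀ s u, sig s ∩ tau u = ∅

/-- Pointed satisfaction `F, π ⊩ φ` for formulas. -/
def SFFS.sat {A S P : Type} {star : S} (F : SFFS A S P star) : SForm A S → P → Prop
  | SForm.atom p, π => p ∈ F.val π
  | SForm.neg φ, π => ¬ F.sat φ π
  | SForm.and φ ψ, π => F.sat φ π ∧ F.sat ψ π
  | SForm.box s φ, π =>
      (π ∈ F.sig star → ∀ π' ∈ F.sig s, F.sat φ π') ∧
      (π ∈ F.tau star → ∀ π' ∈ F.sig s ∪ F.tau s, F.sat φ π')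

/-- Pointed satisfaction for expressions. -/
def SFFS.satE {A S P : Type} {star : S} (F : SFFS A S P star) (e : SExpr A S) (π : P) : Prop :=
  match e with
  | SExpr.form φ => F.sat φ π
  | SExpr.sharp s u => F.sig s ⊆ F.sig u ∧ F.tau s ⊆ F.tau u

/-- Global satisfaction `F ⊩ φ` of a formula. -/
def SFFS.models {A S P : Type} {star : S} (F : SFFS A S P star) (φ : SForm A S) : Prop :=
  ∀ π ∈ F.Pi, F.sat φ π

/-- Global satisfaction of an expression. -/
def SFFS.modelsE {A S P : Type} {star : S} (F : SFFS A S P star) (e : SExpr A S) : Prop :=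
  ∀ π ∈ F.Pi, F.satE e π

/-- `F` is a model of a theory (set of expressions) `T`. -/
def SFFS.isModel {A S P : Type} {star : S} (F : SFFS A S P star) (T : Set (SExpr A S)) : Prop :=
  ∀ e ∈ T, F.modelsE e

/-- `F` is a model of a set of formulas `T`. -/
def SFFS.isModelF {A S P : Type} {star : S} (F : SFFS A S P star) (T : Set (SForm A S)) : Prop :=
  ∀ φ ∈ T, F.models φ

/-- S5 standpoint structures: all outer sets empty. -/
def SFFS.IsS5 {A S P : Type} {star : S} (F : SFFS A S P star) : Prop :=
  ∀ s, F.tau s = ∅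

/-- Determination preorder `F1 ⊴_s F2`, per standpoint. -/
def prefS {A S P1 P2 : Type} {star : S} (F1 : SFFS A S P1 star) (F2 : SFFS A S P2 star)
    (s : S) : Prop :=
  F2.val '' F2.sig s = F1.val '' F1.sig s ∧
  F2.val '' F2.tau s ⊆ F1.val '' (F1.sig s ∪ F1.tau s)

/-- Determination preorder `F1 ⊴ F2`. -/
def pref {A S P1 P2 : Type} {star : S} (F1 : SFFS A S P1 star) (F2 : SFFS A S P2 star) : Prop :=
  ∀ s, prefS F1 F2 s

/-- Entailment `T ⊨ e`: every model of `T` satisfies `e`. -/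
def Entails {A S : Type} (star : S) (T : Set (SExpr A S)) (e : SExpr A S) : Prop :=
  ∀ (P : Type) (F : SFFS A S P star), F.isModel T → F.modelsE e

/-- Derivable sharpening `T ⊢ s ≼ u`. -/
inductive Sharpens {A S : Type} (star : S) (T : Set (SExpr A S)) : S → S → Prop
  | of_mem {s u : S} : SExpr.sharp s u ∈ T → Sharpens star T s u
  | to_star (s : S) : Sharpens star T s star
  | refl (s : S) : Sharpens star T s s
  | trans {s t u : S} : SExpr.sharp s t ∈ T → Sharpens star T t u → Sharpens star T s u

/-- An S5 standpoint structure `F` is a minimal model of a theory `T`. -/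
def isMinimalModel {A S P : Type} {star : S} (F : SFFS A S P star) (T : Set (SExpr A S)) : Prop :=
  F.IsS5 ∧ F.isModel T ∧
  ∀ (P' : Type) (F' : SFFS A S P' star), pref F' F → F'.isModel T → (pref F' F ∧ pref F F')

/-- Formulas of unimodal S4F. -/
inductive KForm (A : Type) : Type
  | atom : A → KForm A
  | neg  : KForm A → KForm A
  | and  : KForm A → KForm A → KForm A
  | K    : KForm A → KForm A

/-- Unimodal S4F structures `M = (V, W, ξ)`. -/
structure S4FStruct (A P : Type) where
  V : Set P
  W : Set P
  val : P → Set A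
  disj : V ∩ W = ∅
  W_nonempty : W.Nonempty

/-- Pointed satisfaction for unimodal S4F. -/
def S4FStruct.sat {A P : Type} (M : S4FStruct A P) : KForm A → P → Prop
  | KForm.atom p, w => p ∈ M.val w
  | KForm.neg φ, w => ¬ M.sat φ w
  | KForm.and φ ψ, w => M.sat φ w ∧ M.sat ψ w
  | KForm.K φ, w =>
      (w ∈ M.V → ∀ v ∈ M.V ∪ M.W, M.sat φ v) ∧
      (w ∈ M.W → ∀ v ∈ M.W, M.sat φ v)

def S4FStruct.isModel {A P : Type} (M : S4FStruct A P) (T : Set (KForm A)) : Prop :=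
  ∀ φ ∈ T, ∀ w ∈ M.V ∪ M.W, M.sat φ w

/-- Translation `T[K/□_*]`: replace `K` by the universal box. -/
def trK {A : Type} : KForm A → SForm A Unit
  | KForm.atom p => SForm.atom p
  | KForm.neg φ => SForm.neg (trK φ)
  | KForm.and φ ψ => SForm.and (trK φ) (trK ψ)
  | KForm.K φ => SForm.box () (trK φ)

def toF {A P : Type} (M : S4FStruct A P) : SFFS A Unit P () where
  Pi := M.V ∪ M.W
  sig := fun _ => M.W
  tau := fun _ => M.V
  val := M.val
  nonempty_Pi := M.W_nonempty.imp fun _ h => Or.inr h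
  sig_sub := fun _ => Set.subset_union_right
  tau_sub := fun _ => Set.subset_union_left
  star_union := Set.union_comm _ _
  sig_nonempty := fun _ => M.W_nonempty
  sig_tau_disj := fun _ _ => by rw [Set.inter_comm]; exact M.disj

def toM {A P : Type} (F : SFFS A Unit P ()) : S4FStruct A P where
  V := F.tau ()
  W := F.sig ()
  val := F.val
  disj := by rw [Set.inter_comm]; exact F.sig_tau_disj () ()
  W_nonempty := F.sig_nonempty ()

@[simp] lemma toF_sig {A P : Type} (M : S4FStruct A P) (u : Unit) : (toF M).sig u = M.W := rfl
@[simp] lemma toF_tau {A P : Type} (M : S4FStruct A P) (u : Unit) : (toF M).tau u = M.V := rfl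
@[simp] lemma toF_val {A P : Type} (M : S4FStruct A P) : (toF M).val = M.val := rfl

lemma SFFS.ext' {A S P : Type} {star : S} {F G : SFFS A S P star}
    (h1 : F.Pi = G.Pi) (h2 : F.sig = G.sig) (h3 : F.tau = G.tau) (h4 : F.val = G.val) :
    F = G := by
  cases F; cases G
  simp only at h1 h2 h3 h4
  subst h1; subst h2; subst h3; subst h4
  rfl

lemma sat_iff {A P : Type} (M : S4FStruct A P) (φ : KForm A) (w : P) :
    (toF M).sat (trK φ) w ↔ M.sat φ w := by
  induction φ generalizing w with
  | atom p => rfl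
  | neg φ ih => simp [SFFS.sat, S4FStruct.sat, trK, ih]
  | and φ ψ ih1 ih2 => simp [SFFS.sat, S4FStruct.sat, trK, ih1, ih2]
  | K φ ih =>
    simp only [SFFS.sat, S4FStruct.sat, trK, ih, toF_sig, toF_tau, Set.mem_union]
    constructor
    · rintro ⟨h1, h2⟩
      exact ⟨fun hv v hvw => h2 hv v hvw.symm, h1⟩
    · rintro ⟨h1, h2⟩
      exact ⟨h2, fun hv v hvw => h1 hv v hvw.symm⟩

lemma model_iff {A P : Type} (M : S4FStruct A P) (T : Set (KForm A)) :
    M.isModel T ↔ (toF M).isModelF (trK '' T) := by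
  constructor
  · rintro h ψ ⟨φ, hφ, rfl⟩ π hπ
    exact (sat_iff M φ π).mpr (h φ hφ π hπ)
  · intro h φ hφ w hw
    exact (sat_iff M φ w).mp (h _ ⟨φ, hφ, rfl⟩ w hw)

/-- The map `M = (V, W, ξ) ↦ (V ∪ W, σ, τ, γ)` with `σ(*) = W`, `τ(*) = V`,
`γ = ξ` is a bijection between S4F structures satisfying `T` and S4F standpoint structures
(over the single standpoint `*`) satisfying `T[K/□_*]`. -/
theorem s4f_equiv_s4fSL {A P : Type} (T : Set (KForm A)) :
    ∃ e : {M : S4FStruct A P // M.isModel T} ≃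
          {F : SFFS A Unit P () // F.isModelF (trK '' T)},
      ∀ M : {M : S4FStruct A P // M.isModel T},
        (e M).val.Pi = M.val.V ∪ M.val.W ∧ (e M).val.sig () = M.val.W ∧
        (e M).val.tau () = M.val.V ∧ (e M).val.val = M.val.val := by
  refine ⟨⟨fun M => ⟨toF M.val, (model_iff M.val T).mp M.2⟩,
          fun F => ⟨toM F.val, (model_iff (toM F.val) T).mpr ?_⟩, ?_, ?_⟩,
          fun M => ⟨rfl, rfl, rfl, rfl⟩⟩
  · have hF : toF (toM F.val) = F.val :=
      SFFS.ext' (by rw [show (toF (toM F.val)).Pi = F.val.tau () ∪ F.val.sig () from rfl, Set.union_comm]; exact F.val.star_union) (by funext u; cases u; rfl) (by funext u; cases u; rfl) rfl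
    rw [hF]; exact F.2
  · rintro ⟨M, hM⟩
    apply Subtype.ext
    cases M
    rfl
  · rintro ⟨F, hF⟩
    apply Subtype.ext
    exact SFFS.ext' (by rw [show (toF (toM F)).Pi = F.tau () ∪ F.sig () from rfl, Set.union_comm]; exact F.star_union) (by funext u; cases u; rfl) (by funext u; cases u; rfl) rfl
end

section
/- Let F1 = (Π1, σ1, τ1, γ1) and F2 = (Π2, σ2, τ2, γ2) be S4F standpoint structures over the same atoms A and standpoint names S with F1 ⊴ F2. Then for every formula φ, every s ∈ S, every π1 ∈ σ1(s) and π2 ∈ σ2(s) with γ1(π1) = γ2(π2): F1, π1 ⊩ φ if and only if F2, π2 ⊩ φ. -/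
/-- If `F1 ⊴ F2` then satisfaction agrees on inner precisifications of the
same standpoint carrying the same valuation. -/
theorem sat_iff_of_pref_inner {A S P1 P2 : Type} (star : S)
    (F1 : SFFS A S P1 star) (F2 : SFFS A S P2 star) (h : pref F1 F2)
    (φ : SForm A S) (s : S) (π1 : P1) (π2 : P2)
    (h1 : π1 ∈ F1.sig s) (h2 : π2 ∈ F2.sig s) (hval : F1.val π1 = F2.val π2) :
    F1.sat φ π1 ↔ F2.sat φ π2 := by
  induction φ generalizing s π1 π2 with
  | atom p =>
    simp only [SFFS.sat, hval]
  | neg ψ ih =>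
    simp only [SFFS.sat]
    exact not_congr (ih s π1 π2 h1 h2 hval)
  | and ψ χ ih1 ih2 =>
    simp only [SFFS.sat]
    exact and_congr (ih1 s π1 π2 h1 h2 hval) (ih2 s π1 π2 h1 h2 hval)
  | box u ψ ih =>
    have hin : ∀ {P : Type} (F : SFFS A S P star) (t : S) (π : P), π ∈ F.sig t →
        π ∈ F.sig star ∧ π ∉ F.tau star := by
      intro P F t π hπ
      have hPi : π ∈ F.Pi := F.sig_sub t hπ
      have hdisj := F.sig_tau_disj t star
      have hnt : π ∉ F.tau star := fun ht => by
        have : π ∈ F.sig t ∩ F.tau star := ⟨hπ, ht⟩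
        rw [hdisj] at this; exact this
      have : π ∈ F.sig star ∪ F.tau star := F.star_union ▸ hPi
      exact ⟨this.resolve_right hnt, hnt⟩
    obtain ⟨h1s, h1t⟩ := hin F1 s π1 h1
    obtain ⟨h2s, h2t⟩ := hin F2 s π2 h2
    simp only [SFFS.sat]
    constructor
    · rintro ⟨ha, -⟩
      refine ⟨fun _ π2' h2' => ?_, fun h => absurd h h2t⟩
      have : F2.val π2' ∈ F2.val '' F2.sig u := ⟨π2', h2', rfl⟩
      rw [(h u).1] at this
      obtain ⟨π1', h1', hv⟩ := this
      exact (ih u π1' π2' h1' h2' hv).mp (ha h1s π1' h1')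
    · rintro ⟨ha, -⟩
      refine ⟨fun _ π1' h1' => ?_, fun hh => absurd hh h1t⟩
      have : F1.val π1' ∈ F1.val '' F1.sig u := ⟨π1', h1', rfl⟩
      rw [← (h u).1] at this
      obtain ⟨π2', h2', hv⟩ := this
      exact (ih u π1' π2' h1' h2' hv.symm).mpr (ha h2s π2' h2')
end

section
/- Let F1 = (Π1, σ1, τ1, γ1) and F2 = (Π2, σ2, τ2, γ2) be S4F standpoint structures over the same atoms A and standpoint names S with F1 ⊴ F2. Then for every formula φ, all s, u ∈ S, every π1 ∈ τ1(s) and every π2 ∈ σ2(s): if F1, π1 ⊩ □_u φ then F2, π2 ⊩ □_u φ. -/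
lemma sig_inner {A S P : Type} {star : S} (F : SFFS A S P star) (s : S) :
    F.sig s ⊆ F.sig star := by
  intro π hπ
  have hPi : π ∈ F.sig star ∪ F.tau star := F.star_union ▸ F.sig_sub s hπ
  rcases hPi with hh | hh
  · exact hh
  · exact absurd (F.sig_tau_disj s star ▸ Set.mem_inter hπ hh) (Set.notMem_empty π)

lemma not_tau_of_sig {A S P : Type} {star : S} (F : SFFS A S P star) {s u : S} {π : P}
    (hπ : π ∈ F.sig s) : π ∉ F.tau u := fun ht =>
  Set.notMem_empty π (F.sig_tau_disj s u ▸ Set.mem_inter hπ ht)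

lemma sat_inner_iff {A S P1 P2 : Type} {star : S} {F1 : SFFS A S P1 star}
    {F2 : SFFS A S P2 star} (h : pref F1 F2) :
    ∀ φ : SForm A S, ∀ π1 π2, π1 ∈ F1.sig star → π2 ∈ F2.sig star →
      F1.val π1 = F2.val π2 → (F1.sat φ π1 ↔ F2.sat φ π2) := by
  intro φ
  induction φ with
  | atom p => intro π1 π2 _ _ hv; simp [SFFS.sat, hv]
  | neg φ ih => intro π1 π2 h1 h2 hv; simp [SFFS.sat, ih π1 π2 h1 h2 hv]
  | and φ ψ ih1 ih2 =>
      intro π1 π2 h1 h2 hv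
      simp [SFFS.sat, ih1 π1 π2 h1 h2 hv, ih2 π1 π2 h1 h2 hv]
  | box v φ ih =>
    intro π1 π2 h1 h2 _
    have nt1 : π1 ∉ F1.tau star := not_tau_of_sig F1 h1
    have nt2 : π2 ∉ F2.tau star := not_tau_of_sig F2 h2
    constructor
    · rintro ⟨hin, _⟩
      refine ⟨fun _ => ?_, fun ht => absurd ht nt2⟩
      intro π' hπ'
      obtain ⟨π'', hπ'', hval⟩ : F2.val π' ∈ F1.val '' F1.sig v :=
        (h v).1 ▸ ⟨π', hπ', rfl⟩
      exact (ih π'' π' (sig_inner F1 v hπ'') (sig_inner F2 v hπ') hval).1 (hin h1 π'' hπ'')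
    · rintro ⟨hin, _⟩
      refine ⟨fun _ => ?_, fun ht => absurd ht nt1⟩
      intro π' hπ'
      obtain ⟨π'', hπ'', hval⟩ : F1.val π' ∈ F2.val '' F2.sig v :=
        (h v).1.symm ▸ ⟨π', hπ', rfl⟩
      exact (ih π' π'' (sig_inner F1 v hπ') (sig_inner F2 v hπ'') hval.symm).2 (hin h2 π'' hπ'')

/-- If `F1 ⊴ F2`, boxed knowledge passes from outer precisifications of `F1`
to inner precisifications of `F2` (for the same standpoint `s`). -/
theorem box_passing_of_pref {A S P1 P2 : Type} (star : S)
    (F1 : SFFS A S P1 star) (F2 : SFFS A S P2 star) (h : pref F1 F2)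
    (φ : SForm A S) (s u : S) (π1 : P1) (π2 : P2)
    (h1 : π1 ∈ F1.tau s) (h2 : π2 ∈ F2.sig s) :
    F1.sat (SForm.box u φ) π1 → F2.sat (SForm.box u φ) π2 := by
  have hτ1 : π1 ∈ F1.tau star := by
    have hPi : π1 ∈ F1.sig star ∪ F1.tau star := F1.star_union ▸ F1.tau_sub s h1
    rcases hPi with hh | hh
    · exact absurd h1 (not_tau_of_sig F1 hh)
    · exact hh
  have hσ2 : π2 ∈ F2.sig star := sig_inner F2 s h2
  rintro ⟨_, houter⟩
  have hall : ∀ π' ∈ F1.sig u ∪ F1.tau u, F1.sat φ π' := houter hτ1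
  refine ⟨fun _ => ?_, fun ht => absurd ht (not_tau_of_sig F2 h2)⟩
  intro π' hπ'
  obtain ⟨π'', hπ'', hval⟩ : F2.val π' ∈ F1.val '' F1.sig u :=
    (h u).1 ▸ ⟨π', hπ', rfl⟩
  exact (sat_inner_iff h φ π'' π' (sig_inner F1 u hπ'') (sig_inner F2 u hπ') hval).1
    (hall π'' (Or.inl hπ''))
end

section
/- Let F1 and F2 be S4F standpoint structures over the same atoms A and standpoint names S with F1 ⊴ F2, and suppose F2 is an S5 standpoint structure. Then for every formula φ and every u ∈ S: if F1 ⊩ □_u φ then F2 ⊩ □_u φ. -/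
theorem sat_transfer_key {A S P1 P2 : Type} {star : S}
    (F1 : SFFS A S P1 star) (F2 : SFFS A S P2 star) (h : pref F1 F2) (hS5 : F2.IsS5)
    (φ : SForm A S) :
    ∀ π1 ∈ F1.sig star, ∀ π2 ∈ F2.Pi, F1.val π1 = F2.val π2 →
      (F1.sat φ π1 ↔ F2.sat φ π2) := by
  have hsig2 : F2.sig star = F2.Pi := by
    rw [← F2.star_union, hS5 star]; simp
  induction φ with
  | atom p => intro π1 _ π2 _ hv; simp [SFFS.sat, hv]
  | neg φ ih =>
    intro π1 h1 π2 h2 hv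
    simp only [SFFS.sat]; rw [ih π1 h1 π2 h2 hv]
  | and φ ψ ih1 ih2 =>
    intro π1 h1 π2 h2 hv
    simp only [SFFS.sat]; rw [ih1 π1 h1 π2 h2 hv, ih2 π1 h1 π2 h2 hv]
  | box t φ ih =>
    intro π1 h1 π2 h2 hv
    have hπ1nt : π1 ∉ F1.tau star := fun hh =>
      Set.eq_empty_iff_forall_notMem.mp (F1.sig_tau_disj star star) π1 ⟨h1, hh⟩
    have hπ2s : π2 ∈ F2.sig star := hsig2 ▸ h2
    -- points of F1.sig t are in F1.sig star
    have hsigstar : ∀ π' ∈ F1.sig t, π' ∈ F1.sig star := by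
      intro π' hπ'
      have hPi1 : π' ∈ F1.Pi := F1.sig_sub t hπ'
      rw [← F1.star_union] at hPi1
      rcases hPi1 with hh | hh
      · exact hh
      · exact absurd ⟨hπ', hh⟩ (Set.eq_empty_iff_forall_notMem.mp (F1.sig_tau_disj t star) π')
    simp only [SFFS.sat]
    constructor
    · rintro ⟨hσ, -⟩
      refine ⟨fun _ π' hπ' => ?_, fun hτ => absurd (hS5 star ▸ hτ) (Set.notMem_empty π2)⟩
      have : F2.val π' ∈ F1.val '' F1.sig t := (h t).1 ▸ ⟨π', hπ', rfl⟩
      obtain ⟨π1', hπ1', hveq⟩ := this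
      exact (ih π1' (hsigstar π1' hπ1') π' (F2.sig_sub t hπ') hveq).mp (hσ h1 π1' hπ1')
    · rintro ⟨hσ, -⟩
      refine ⟨fun _ π' hπ' => ?_, fun hτ => absurd hτ hπ1nt⟩
      have : F1.val π' ∈ F2.val '' F2.sig t := by rw [(h t).1]; exact ⟨π', hπ', rfl⟩
      obtain ⟨π2', hπ2', hveq⟩ := this
      exact (ih π' (hsigstar π' hπ') π2' (F2.sig_sub t hπ2') hveq.symm).mpr
        (hσ hπ2s π2' hπ2')

/-- If `F1 ⊴ F2` and `F2` is S5, then `F1 ⊩ □_u φ` implies `F2 ⊩ □_u φ`. -/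
theorem box_global_passing_of_pref {A S P1 P2 : Type} (star : S)
    (F1 : SFFS A S P1 star) (F2 : SFFS A S P2 star) (h : pref F1 F2) (hS5 : F2.IsS5)
    (φ : SForm A S) (u : S) :
    F1.models (SForm.box u φ) → F2.models (SForm.box u φ) := by
  intro hm π2 hπ2
  refine ⟨fun _ π' hπ' => ?_, fun hτ => absurd (hS5 star ▸ hτ) (Set.notMem_empty π2)⟩
  have : F2.val π' ∈ F1.val '' F1.sig u := (h u).1 ▸ ⟨π', hπ', rfl⟩
  obtain ⟨π1', hπ1', hveq⟩ := this
  have hPi1 : π1' ∈ F1.Pi := F1.sig_sub u hπ1'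
  have hstar : π1' ∈ F1.sig star := by
    have := hPi1; rw [← F1.star_union] at this
    rcases this with hh | hh
    · exact hh
    · exact absurd ⟨hπ1', hh⟩ (Set.eq_empty_iff_forall_notMem.mp (F1.sig_tau_disj u star) π1')
  have hsat : F1.sat φ π1' := (hm π1' hPi1).1 hstar π1' hπ1'
  exact (sat_transfer_key F1 F2 h hS5 φ π1' hstar π' (F2.sig_sub u hπ') hveq).mp hsat
end

section
/- Let A be a finite set of atoms and F an S5 standpoint structure over A and S. Define Unknown(F) := { ¬□_s φ : s ∈ S, φ a formula, and F ⊮ □_s φ }. Then for every S4F standpoint structure F' over A and S: F' ⊴ F if and only if F' ⊩ χ for every χ ∈ Unknown(F). -/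
/-!
At a point of `σ(*)` a box `□_s` only inspects `σ(s) ⊆ σ(*)`, so truth at such points depends
only on the valuation of the point and on the sets `γ(σ(u))`. Hence, if `F'` and `F` have the
same sets `γ(σ(u))`, a refutation of `φ` inside `σ(s)` in one structure transfers to the other;
this is the forward direction, the `τ`-part of `⊴` being vacuous because `F` is S5.
Conversely, with finitely many atoms every valuation `v` has a characteristic formula `χ_v`.
The unknown `¬□_s ¬χ_v` for `v ∈ γ(σ(s))` puts `v` into `γ'(σ'(s))`, and the unknown
`¬□_s ¬□_s ¬χ_v` for `v ∉ γ(σ(s))` keeps `v` out of it.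
-/

namespace SFFS

variable {A S P P' : Type} {star : S} (F : SFFS A S P star)

theorem notMem_tau_of_mem_sig {π : P} {s : S} (h : π ∈ F.sig s) (u : S) : π ∉ F.tau u :=
  fun h' => Set.notMem_empty π (F.sig_tau_disj s u ▸ ⟨h, h'⟩)

theorem sig_subset_sig_star (s : S) : F.sig s ⊆ F.sig star := fun π h =>
  (F.star_union ▸ F.sig_sub s h : π ∈ F.sig star ∪ F.tau star).resolve_right
    (F.notMem_tau_of_mem_sig h star)

theorem sat_box_of_mem_sig_star {π : P} (hπ : π ∈ F.sig star) (s : S) (φ : SForm A S) :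
    F.sat (.box s φ) π ↔ ∀ π' ∈ F.sig s, F.sat φ π' := by
  simp [sat, hπ, F.notMem_tau_of_mem_sig hπ star]

theorem models_neg_box_iff (s : S) (φ : SForm A S) :
    F.models (.neg (.box s φ)) ↔ ∃ π ∈ F.sig s, ¬ F.sat φ π := by
  constructor
  · intro h
    obtain ⟨π₀, hπ₀⟩ := F.sig_nonempty star
    have : ¬ F.sat (.box s φ) π₀ := h π₀ (F.sig_sub star hπ₀)
    simpa [F.sat_box_of_mem_sig_star hπ₀] using this
  · rintro ⟨π, hπ, hφ⟩ π₀ hπ₀ ⟨hsig, htau⟩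
    rcases (F.star_union ▸ hπ₀ : π₀ ∈ F.sig star ∪ F.tau star) with h | h
    · exact hφ (hsig h π hπ)
    · exact hφ (htau h π (Or.inl hπ))

theorem IsS5.models_box_iff {F : SFFS A S P star} (hF : F.IsS5) (s : S) (φ : SForm A S) :
    F.models (.box s φ) ↔ ∀ π ∈ F.sig s, F.sat φ π := by
  have hPi : F.Pi = F.sig star := by simpa [hF star] using F.star_union.symm
  obtain ⟨π₀, hπ₀⟩ := F.nonempty_Pi
  rw [hPi] at hπ₀
  simp only [models, hPi]
  exact ⟨fun h => (F.sat_box_of_mem_sig_star hπ₀ s φ).1 (h π₀ hπ₀),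
    fun h π hπ => (F.sat_box_of_mem_sig_star hπ s φ).2 h⟩

theorem sat_iff_sat_of_image_sig_eq {F' : SFFS A S P' star}
    (h : ∀ u, F.val '' F.sig u = F'.val '' F'.sig u) (φ : SForm A S) {π : P} {π' : P'}
    (hπ : π ∈ F.sig star) (hπ' : π' ∈ F'.sig star) (hval : F.val π = F'.val π') :
    F.sat φ π ↔ F'.sat φ π' := by
  induction φ generalizing π π' with
  | atom p => simp [sat, hval]
  | neg φ ih => simp only [sat, ih hπ hπ' hval]
  | and φ ψ ihφ ihψ => simp only [sat, ihφ hπ hπ' hval, ihψ hπ hπ' hval]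
  | box u φ ih =>
    rw [F.sat_box_of_mem_sig_star hπ, F'.sat_box_of_mem_sig_star hπ']
    constructor
    · intro hall ρ' hρ'
      obtain ⟨ρ, hρ, hv⟩ : F'.val ρ' ∈ F.val '' F.sig u := h u ▸ ⟨ρ', hρ', rfl⟩
      exact (ih (F.sig_subset_sig_star u hρ) (F'.sig_subset_sig_star u hρ') hv).1 (hall ρ hρ)
    · intro hall ρ hρ
      obtain ⟨ρ', hρ', hv⟩ : F.val ρ ∈ F'.val '' F'.sig u := h u ▸ ⟨ρ, hρ, rfl⟩
      exact (ih (F.sig_subset_sig_star u hρ) (F'.sig_subset_sig_star u hρ') hv.symm).2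
        (hall ρ' hρ')

open Classical in
noncomputable def literal (v : Set A) (p : A) : SForm A S :=
  if p ∈ v then .atom p else .neg (.atom p)

theorem sat_literal (v : Set A) (p : A) (π : P) :
    F.sat (literal v p) π ↔ (p ∈ F.val π ↔ p ∈ v) := by
  unfold literal
  split_ifs with h <;> simp [sat, h]

theorem sat_foldr_and (f : A → SForm A S) (l : List A) (χ : SForm A S) (π : P) :
    F.sat (l.foldr (fun p ψ => .and (f p) ψ) χ) π ↔ (∀ p ∈ l, F.sat (f p) π) ∧ F.sat χ π := by
  induction l with
  | nil => simp
  | cons p l ih => simp only [List.foldr_cons, sat, ih, List.forall_mem_cons, and_assoc]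

/-- The characteristic formula of the valuation `v`; the atom `a` only supplies the innermost
conjunct, since there is no formula `⊤`. -/
noncomputable def charForm [Fintype A] (v : Set A) (a : A) : SForm A S :=
  (Finset.univ : Finset A).toList.foldr (fun p χ => .and (literal v p) χ) (literal v a)

theorem sat_charForm [Fintype A] (v : Set A) (a : A) (π : P) :
    F.sat (charForm v a) π ↔ F.val π = v := by
  simp only [charForm, sat_foldr_and, sat_literal, Finset.mem_toList, Finset.mem_univ,
    forall_const, Set.ext_iff]
  exact ⟨And.left, fun h => ⟨h, h a⟩⟩

theorem exists_not_sat_of_image_sig_eq {F' : SFFS A S P' star}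
    (h : ∀ u, F.val '' F.sig u = F'.val '' F'.sig u) {s : S} {φ : SForm A S}
    (hφ : ∃ π ∈ F.sig s, ¬ F.sat φ π) : ∃ π' ∈ F'.sig s, ¬ F'.sat φ π' := by
  obtain ⟨π, hπ, hnot⟩ := hφ
  obtain ⟨π', hπ', hval⟩ : F.val π ∈ F'.val '' F'.sig s := h s ▸ ⟨π, hπ, rfl⟩
  refine ⟨π', hπ', fun hsat => hnot ?_⟩
  exact (F.sat_iff_sat_of_image_sig_eq h φ (F.sig_subset_sig_star s hπ)
    (F'.sig_subset_sig_star s hπ') hval.symm).2 hsat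

theorem image_sig_eq_of_exists_not_sat [Fintype A] {F' : SFFS A S P' star} (s : S)
    (h : ∀ φ : SForm A S, (∃ π ∈ F.sig s, ¬ F.sat φ π) → ∃ π' ∈ F'.sig s, ¬ F'.sat φ π') :
    F.val '' F.sig s = F'.val '' F'.sig s := by
  rcases isEmpty_or_nonempty A with _ | ⟨⟨a⟩⟩
  · have hval : ∀ v w : Set A, v = w := fun v w => Set.ext fun p => isEmptyElim p
    obtain ⟨π, hπ⟩ := F.sig_nonempty s
    obtain ⟨π', hπ'⟩ := F'.sig_nonempty s
    ext v
    exact ⟨fun _ => ⟨π', hπ', hval _ _⟩, fun _ => ⟨π, hπ, hval _ _⟩⟩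
  refine Set.Subset.antisymm ?_ ?_
  · rintro _ ⟨π, hπ, rfl⟩
    obtain ⟨π', hπ', hχ⟩ := h (.neg (charForm (F.val π) a))
      ⟨π, hπ, fun hneg => hneg ((F.sat_charForm _ a π).2 rfl)⟩
    exact ⟨π', hπ', (F'.sat_charForm _ a π').1 (not_not.1 hχ)⟩
  · rintro _ ⟨π₀', hπ₀', rfl⟩
    by_contra hv
    -- `□_s ¬χ_v` holds throughout `σ(s)` in `F`, so `F ⊮ □_s ¬□_s ¬χ_v`.
    set χ := charForm (F'.val π₀') a
    have hbox : ∀ π ∈ F.sig s, F.sat (.box s (.neg χ)) π := fun π hπ =>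
      (F.sat_box_of_mem_sig_star (F.sig_subset_sig_star s hπ) s _).2
        fun ρ hρ hχ => hv ⟨ρ, hρ, (F.sat_charForm _ a ρ).1 hχ⟩
    obtain ⟨π₀, hπ₀⟩ := F.sig_nonempty s
    obtain ⟨π', hπ', hbox'⟩ := h (.neg (.box s (.neg χ)))
      ⟨π₀, hπ₀, not_not.2 (hbox π₀ hπ₀)⟩
    exact (F'.sat_box_of_mem_sig_star (F'.sig_subset_sig_star s hπ') s _).1 (not_not.1 hbox')
      π₀' hπ₀' ((F'.sat_charForm _ a π₀').2 rfl)

theorem IsS5.pref_iff {F : SFFS A S P star} (hF : F.IsS5) (F' : SFFS A S P' star) :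
    pref F' F ↔ ∀ s, F.val '' F.sig s = F'.val '' F'.sig s := by
  simp [pref, prefS, hF _]

end SFFS

/-- For an S5 structure `F` (finite vocabulary), `F' ⊴ F` iff `F'` globally
satisfies every element of `Unknown(F) = { ¬□_s φ : F ⊮ □_s φ }`. -/
theorem pref_iff_models_unknown {A S P P' : Type} [Fintype A] (star : S)
    (F : SFFS A S P star) (hS5 : F.IsS5) (F' : SFFS A S P' star) :
    pref F' F ↔
      ∀ (s : S) (φ : SForm A S), ¬ F.models (SForm.box s φ) →
        F'.models (SForm.neg (SForm.box s φ)) := by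
  simp only [hS5.models_box_iff, F'.models_neg_box_iff, not_forall, exists_prop, hS5.pref_iff]
  exact ⟨fun h s _ hφ => F.exists_not_sat_of_image_sig_eq h hφ,
    fun h s => F.image_sig_eq_of_exists_not_sat s (h s)⟩
end

section
/- Let F be an S5 standpoint structure and F' an S4F standpoint structure over the same atoms A and standpoint names S such that F ⊴ F'. Then for every formula φ: F ⊩ φ if and only if F' ⊩ φ. -/
/-- If `F` is S5 and `F ⊴ F'`, then `F` and `F'` satisfy the same formulas. -/
theorem models_iff_of_S5_pref {A S P P' : Type} (star : S)
    (F : SFFS A S P star) (hS5 : F.IsS5) (F' : SFFS A S P' star) (h : pref F F')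
    (φ : SForm A S) :
    F.models φ ↔ F'.models φ := by
  have hPiEq : F.Pi = F.sig star := by
    have := F.star_union
    rw [hS5 star, Set.union_empty] at this
    exact this.symm
  have key : ∀ (ψ : SForm A S) (π : P) (ρ : P'), π ∈ F.Pi → ρ ∈ F'.Pi →
      F.val π = F'.val ρ → (F.sat ψ π ↔ F'.sat ψ ρ) := by
    intro ψ
    induction ψ with
    | atom p => intro π ρ _ _ hv; simp [SFFS.sat, hv]
    | neg ψ ih => intro π ρ hπ hρ hv; simp [SFFS.sat, ih π ρ hπ hρ hv]
    | and ψ χ ih1 ih2 =>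
      intro π ρ hπ hρ hv
      simp [SFFS.sat, ih1 π ρ hπ hρ hv, ih2 π ρ hπ hρ hv]
    | box s ψ ih =>
      intro π ρ hπ hρ hv
      have hsig : F'.val '' F'.sig s = F.val '' F.sig s := (h s).1
      have htsub : F'.val '' F'.tau s ⊆ F.val '' F.sig s := by
        have h2 := (h s).2
        rwa [hS5 s, Set.union_empty] at h2
      have hπnt : π ∉ F.tau star := by simp [hS5 star]
      have hπs : π ∈ F.sig star := hPiEq ▸ hπ
      have fwd : (∀ π' ∈ F.sig s, F.sat ψ π') →
          ∀ ρ' ∈ F'.sig s ∪ F'.tau s, F'.sat ψ ρ' := by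
        intro hall ρ' hρ'
        have hval : F'.val ρ' ∈ F.val '' F.sig s := by
          rcases hρ' with h1 | h1
          · rw [← hsig]; exact ⟨ρ', h1, rfl⟩
          · exact htsub ⟨ρ', h1, rfl⟩
        obtain ⟨π'', hπ'', heq⟩ := hval
        have hρ'Pi : ρ' ∈ F'.Pi := by
          rcases hρ' with h1 | h1
          · exact F'.sig_sub s h1
          · exact F'.tau_sub s h1
        exact (ih π'' ρ' (F.sig_sub s hπ'') hρ'Pi heq).mp (hall π'' hπ'')
      have bwd : (∀ ρ' ∈ F'.sig s, F'.sat ψ ρ') → ∀ π' ∈ F.sig s, F.sat ψ π' := by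
        intro hall π' hπ'
        have : F.val π' ∈ F'.val '' F'.sig s := by
          rw [hsig]; exact ⟨π', hπ', rfl⟩
        obtain ⟨ρ', hρ', heq⟩ := this
        exact (ih π' ρ' (F.sig_sub s hπ') (F'.sig_sub s hρ') heq.symm).mpr
          (hall ρ' hρ')
      constructor
      · rintro ⟨h1, _⟩
        have hall := h1 hπs
        exact ⟨fun _ ρ' hρ' => fwd hall ρ' (Or.inl hρ'), fun _ => fwd hall⟩
      · rintro ⟨h1, h2⟩
        refine ⟨fun _ => ?_, fun hmem => absurd hmem hπnt⟩
        have hρmem : ρ ∈ F'.sig star ∪ F'.tau star := F'.star_union ▸ hρ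
        rcases hρmem with hc | hc
        · exact bwd (h1 hc)
        · exact bwd (fun ρ' h3 => h2 hc ρ' (Or.inl h3))
  constructor
  · intro hm ρ hρ
    have hval : F'.val ρ ∈ F.val '' F.Pi := by
      have hρmem : ρ ∈ F'.sig star ∪ F'.tau star := F'.star_union ▸ hρ
      rcases hρmem with hc | hc
      · have : F'.val ρ ∈ F.val '' F.sig star := by
          rw [← (h star).1]; exact ⟨ρ, hc, rfl⟩
        rwa [← hPiEq] at this
      · have h2 := (h star).2
        rw [hS5 star, Set.union_empty] at h2
        have : F'.val ρ ∈ F.val '' F.sig star := h2 ⟨ρ, hc, rfl⟩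
        rwa [← hPiEq] at this
    obtain ⟨π, hπ, heq⟩ := hval
    exact (key φ π ρ hπ hρ heq).mp (hm π hπ)
  · intro hm π hπ
    have : F.val π ∈ F'.val '' F'.sig star := by
      rw [(h star).1]; exact ⟨π, hPiEq ▸ hπ, rfl⟩
    obtain ⟨ρ, hρ, heq⟩ := this
    exact (key φ π ρ hπ (F'.sig_sub star hρ) heq.symm).mpr
      (hm ρ (F'.sig_sub star hρ))
end

section
/- The S5 requirement in the mutual-preference equivalence lemma cannot be dropped: there exist a set A of atoms, a set S of standpoint names, S4F standpoint structures F and F' over A and S with F ⊴ F' and F' ⊴ F, and a formula φ such that F ⊩ φ but F' ⊮ φ. Concretely, with A = {p} and standpoints s, u, one may take F with precisifications π_∅ and π_{p} (valuations ∅ and {p}), σ(s) = σ(u) = {π_{p}}, τ(s) = ∅, τ(u) = {π_∅}, and F' the copy of F in which additionally τ'(s) contains a copy of π_{p}; then F ⊩ □_s □_u p but F' ⊮ □_s □_u p. -/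
/-- The structure `F`. -/
def Fex : SFFS Unit (Fin 3) Bool 0 where
  Pi := Set.univ
  sig := fun _ => {true}
  tau := fun k => if k = 1 then ∅ else {false}
  val := fun b => if b then Set.univ else ∅
  nonempty_Pi := ⟨true, trivial⟩
  sig_sub := fun _ => Set.subset_univ _
  tau_sub := fun _ => Set.subset_univ _
  star_union := by
    ext b; cases b <;> simp [Set.mem_union]
  sig_nonempty := fun _ => ⟨true, rfl⟩
  sig_tau_disj := by
    intro s u
    ext b
    simp only [Set.mem_inter_iff, Set.mem_singleton_iff, Set.mem_empty_iff_false, iff_false,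
      not_and]
    rintro rfl
    split <;> simp

/-- The structure `F'`: a copy of `F` with an extra copy `2` of the `{p}` precisification
in `τ'(s)`. -/
def Fex' : SFFS Unit (Fin 3) (Fin 3) 0 where
  Pi := Set.univ
  sig := fun _ => {1}
  tau := fun k => match k with
    | 0 => {0, 2}
    | 1 => {2}
    | 2 => {0}
  val := fun i => if i = 0 then ∅ else Set.univ
  nonempty_Pi := ⟨0, trivial⟩
  sig_sub := fun _ => Set.subset_univ _
  tau_sub := fun _ => Set.subset_univ _
  star_union := by
    ext i; fin_cases i <;> simp
  sig_nonempty := fun _ => ⟨1, rfl⟩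
  sig_tau_disj := by
    intro s u
    ext i
    simp only [Set.mem_inter_iff, Set.mem_singleton_iff, Set.mem_empty_iff_false, iff_false,
      not_and]
    rintro rfl
    fin_cases u <;> simp

/-- The S5 requirement cannot be dropped: there are mutually preferred S4F
standpoint structures `F ⊴ F'` and `F' ⊴ F` and a formula satisfied by `F` but not `F'`. -/
theorem mutual_pref_not_equivalent :
    ∃ (A S P P' : Type) (star : S)
      (F : SFFS A S P star) (F' : SFFS A S P' star) (φ : SForm A S),
      pref F F' ∧ pref F' F ∧ F.models φ ∧ ¬ F'.models φ := by
  refine ⟨Unit, Fin 3, Bool, Fin 3, 0, Fex, Fex',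
    SForm.box 1 (SForm.box 2 (SForm.atom ())), ?_, ?_, ?_, ?_⟩
  · intro s
    constructor
    · ext X
      constructor
      · rintro ⟨i, hi, rfl⟩
        simp only [Fex', Set.mem_singleton_iff] at hi
        subst hi
        exact ⟨true, rfl, by simp [Fex, Fex']⟩
      · rintro ⟨b, hb, rfl⟩
        simp only [Fex, Set.mem_singleton_iff] at hb
        subst hb
        exact ⟨1, rfl, by simp [Fex, Fex']⟩
    · rintro X ⟨i, hi, rfl⟩
      fin_cases s <;> fin_cases i <;> simp_all [Fex, Fex']
  · intro s
    constructor
    · ext X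
      constructor
      · rintro ⟨b, hb, rfl⟩
        simp only [Fex, Set.mem_singleton_iff] at hb
        subst hb
        exact ⟨1, rfl, by simp [Fex, Fex']⟩
      · rintro ⟨i, hi, rfl⟩
        simp only [Fex', Set.mem_singleton_iff] at hi
        subst hi
        exact ⟨true, rfl, by simp [Fex, Fex']⟩
    · rintro X ⟨b, hb, rfl⟩
      fin_cases s <;> fin_cases b <;> simp_all [Fex, Fex']
  · intro π _
    constructor
    · intro _ π' hπ'
      simp only [Fex, Set.mem_singleton_iff] at hπ'
      subst hπ'
      constructor
      · intro _ π'' hπ''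
        simp only [Fex, Set.mem_singleton_iff] at hπ''
        subst hπ''
        simp [SFFS.sat, Fex]
      · intro h
        simp [Fex] at h
    · intro _ π' hπ'
      simp only [Fex, Set.mem_union, Set.mem_singleton_iff] at hπ'
      rcases hπ' with rfl | h
      · constructor
        · intro _ π'' hπ''
          simp only [Fex, Set.mem_singleton_iff] at hπ''
          subst hπ''
          simp [SFFS.sat, Fex]
        · intro h
          simp [Fex] at h
      · simp [Fex] at h
  · intro h
    have h0 := h 0 trivial
    have h2 := h0.2 (by simp [Fex']) 2 (by simp [Fex'])
    have := h2.2 (by simp [Fex']) 0 (Or.inr (by simp [Fex']))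
    simp [SFFS.sat, Fex'] at this
end

section
/- Let T be a theory of S4F standpoint logic and F an S5 standpoint structure for the vocabulary of T. If F is a model of T, then the partition (Φ, Ψ) of Sub□(T) with Ψ := {□_u φ ∈ Sub□(T) : F ⊩ □_u φ} and Φ := Sub□(T) \ Ψ satisfies conditions (C1) and (C2); in particular, Sub□(T) has a partition satisfying (C1) and (C2). -/
/-- The set of subformulas of a formula. -/
def subf {A S : Type} : SForm A S → Set (SForm A S)
  | SForm.atom p => {SForm.atom p}
  | SForm.neg φ => insert (SForm.neg φ) (subf φ)
  | SForm.and φ ψ => insert (SForm.and φ ψ) (subf φ ∪ subf ψ)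
  | SForm.box s φ => insert (SForm.box s φ) (subf φ)

/-- Subformulas of an expression. -/
def subE {A S : Type} : SExpr A S → Set (SForm A S)
  | SExpr.form φ => subf φ
  | SExpr.sharp _ _ => ∅

/-- `Sub□(T)`: boxed subformulas of expressions of `T`. -/
def SubBox {A S : Type} (T : Set (SExpr A S)) : Set (SForm A S) :=
  {χ | (∃ (s : S) (φ : SForm A S), χ = SForm.box s φ) ∧ ∃ e ∈ T, χ ∈ subE e}

/-- Propositional satisfaction over the extended vocabulary `A± = A ∪ Sub□(T)`:
boxed formulas are read as propositional atoms (valuation `EB`). -/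
def psat {A S : Type} (EA : Set A) (EB : Set (SForm A S)) : SForm A S → Prop
  | SForm.atom p => p ∈ EA
  | SForm.neg φ => ¬ psat EA EB φ
  | SForm.and φ ψ => psat EA EB φ ∧ psat EA EB ψ
  | SForm.box s φ => SForm.box s φ ∈ EB

/-- Propositional satisfaction of expressions: sharpening statements are also read as
propositional atoms (valuation `ES`). -/
def psatE {A S : Type} (EA : Set A) (EB : Set (SForm A S)) (ES : Set (S × S)) :
    SExpr A S → Prop
  | SExpr.form φ => psat EA EB φ
  | SExpr.sharp s u => (s, u) ∈ ES

/-- `Ψ_s := {ψ : □_u ψ ∈ Ψ for some u with T ⊢ s ≼ u}`. -/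
def PsiS {A S : Type} (star : S) (T : Set (SExpr A S)) (Ψ : Set (SForm A S)) (s : S) :
    Set (SForm A S) :=
  {ψ | ∃ u : S, SForm.box u ψ ∈ Ψ ∧ Sharpens star T s u}

/-- `Θ_s := T ∪ {¬χ : χ ∈ Φ} ∪ Ψ ∪ Ψ_s`. -/
def Theta {A S : Type} (star : S) (T : Set (SExpr A S)) (Φ Ψ : Set (SForm A S)) (s : S) :
    Set (SExpr A S) :=
  T ∪ (SExpr.form '' (SForm.neg '' Φ)) ∪ (SExpr.form '' Ψ) ∪
    (SExpr.form '' PsiS star T Ψ s)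

/-- Condition (C1): each `Θ_s` is propositionally satisfiable. -/
def C1 {A S : Type} (star : S) (T : Set (SExpr A S)) (Φ Ψ : Set (SForm A S)) : Prop :=
  ∀ s : S, ∃ (EA : Set A) (EB : Set (SForm A S)) (ES : Set (S × S)),
    ∀ e ∈ Theta star T Φ Ψ s, psatE EA EB ES e

/-- Condition (C2): for every `s` and `□_u φ ∈ Φ` with `T ⊢ u ≼ s`, the theory
`Θ_s ∪ {¬φ}` is propositionally satisfiable. -/
def C2 {A S : Type} (star : S) (T : Set (SExpr A S)) (Φ Ψ : Set (SForm A S)) : Prop :=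
  ∀ (s u : S) (φ : SForm A S), SForm.box u φ ∈ Φ → Sharpens star T u s →
    ∃ (EA : Set A) (EB : Set (SForm A S)) (ES : Set (S × S)),
      (∀ e ∈ Theta star T Φ Ψ s, psatE EA EB ES e) ∧ psat EA EB (SForm.neg φ)

/-- Condition (C3): for every `□_s ψ ∈ Ψ`, `T ∪ {¬χ : χ ∈ Φ} ⊨ □_s ψ` in S4F standpoint
logic. -/
def C3 {A S : Type} (star : S) (T : Set (SExpr A S)) (Φ Ψ : Set (SForm A S)) : Prop :=
  ∀ (s : S) (ψ : SForm A S), SForm.box s ψ ∈ Ψ →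
    Entails star (T ∪ (SExpr.form '' (SForm.neg '' Φ)))
      (SExpr.form (SForm.box s ψ))

/-- Inner precisifications of `F_P`: `σ(s) := {F ∩ A : F ⊆ A±, F ⊨ Θ_s}`. -/
def sigP {A S : Type} (star : S) (T : Set (SExpr A S)) (Φ Ψ : Set (SForm A S)) (s : S) :
    Set (Set A) :=
  {EA | ∃ (EB : Set (SForm A S)) (ES : Set (S × S)),
    ∀ e ∈ Theta star T Φ Ψ s, psatE EA EB ES e}

section Aux

variable {A S P : Type} {star : S} (F : SFFS A S P star)

lemma aux_sig_star (hS5 : F.IsS5) : F.sig star = F.Pi := by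
  have h := F.star_union
  rw [hS5 star, Set.union_empty] at h
  exact h

lemma aux_sat_box (hS5 : F.IsS5) {u : S} {φ : SForm A S} {π : P} (hπ : π ∈ F.Pi) :
    F.sat (SForm.box u φ) π ↔ ∀ π' ∈ F.sig u, F.sat φ π' := by
  simp only [SFFS.sat]
  constructor
  · intro h
    exact h.1 (by rw [aux_sig_star F hS5]; exact hπ)
  · intro h
    refine ⟨fun _ => h, fun hτ => ?_⟩
    rw [hS5 star] at hτ
    exact absurd hτ (Set.notMem_empty π)

lemma aux_models_box (hS5 : F.IsS5) {u : S} {φ : SForm A S} :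
    F.models (SForm.box u φ) ↔ ∀ π' ∈ F.sig u, F.sat φ π' := by
  constructor
  · intro h
    obtain ⟨π, hπ⟩ := F.nonempty_Pi
    exact (aux_sat_box F hS5 hπ).mp (h π hπ)
  · intro h π hπ
    exact (aux_sat_box F hS5 hπ).mpr h

lemma aux_sharp_sub {T : Set (SExpr A S)} (hS5 : F.IsS5) (hmod : F.isModel T)
    {s u : S} (h : Sharpens star T s u) : F.sig s ⊆ F.sig u := by
  induction h with
  | of_mem hm =>
    obtain ⟨π, hπ⟩ := F.nonempty_Pi
    exact (hmod _ hm π hπ).1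
  | to_star s =>
    rw [aux_sig_star F hS5]
    exact F.sig_sub s
  | refl s => exact subset_rfl
  | trans hm _ ih =>
    obtain ⟨π, hπ⟩ := F.nonempty_Pi
    exact (hmod _ hm π hπ).1.trans ih

lemma aux_psat (hS5 : F.IsS5) (φ : SForm A S) {π : P} (hπ : π ∈ F.Pi) :
    psat (F.val π) {χ | F.models χ} φ ↔ F.sat φ π := by
  induction φ with
  | atom p => exact Iff.rfl
  | neg φ ih => simp only [psat, SFFS.sat, ih]
  | and φ ψ ih1 ih2 => simp only [psat, SFFS.sat, ih1, ih2]
  | box u φ _ =>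
    show F.models (SForm.box u φ) ↔ _
    rw [aux_models_box F hS5, aux_sat_box F hS5 hπ]

/-- Key satisfaction lemma for `Θ_s` at a precisification in `σ(s)`. -/
lemma aux_theta {T : Set (SExpr A S)} (hS5 : F.IsS5) (hmod : F.isModel T) (s : S)
    {π : P} (hπ : π ∈ F.sig s) :
    ∀ e ∈ Theta star T (SubBox T \ {χ ∈ SubBox T | F.models χ})
        {χ ∈ SubBox T | F.models χ} s,
      psatE (F.val π) {χ | F.models χ}
        {p | F.sig p.1 ⊆ F.sig p.2 ∧ F.tau p.1 ⊆ F.tau p.2} e := by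
  have hpiPi : π ∈ F.Pi := F.sig_sub s hπ
  intro e he
  rcases he with ((heT | heΦ) | heΨ) | heΨs
  · -- e ∈ T
    cases e with
    | form φ =>
      exact (aux_psat F hS5 φ hpiPi).mpr (hmod _ heT π hpiPi)
    | sharp a b =>
      exact hmod _ heT π hpiPi
  · -- e = form (neg χ), χ ∈ Φ
    obtain ⟨φ, ⟨χ, hχ, rfl⟩, rfl⟩ := heΦ
    obtain ⟨u, ψ, hshape⟩ := hχ.1.1
    subst hshape
    show ¬ psat (F.val π) {χ | F.models χ} (SForm.box u ψ)
    intro hcon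
    exact hχ.2 ⟨hχ.1, hcon⟩
  · -- e = form χ, χ ∈ Ψ
    obtain ⟨χ, hχ, rfl⟩ := heΨ
    exact (aux_psat F hS5 χ hpiPi).mpr (hχ.2 π hpiPi)
  · -- e = form ψ, ψ ∈ Ψ_s
    obtain ⟨ψ, ⟨u, hu, hsu⟩, rfl⟩ := heΨs
    have hmodels : F.models (SForm.box u ψ) := hu.2
    have hsub : F.sig s ⊆ F.sig u := aux_sharp_sub F hS5 hmod hsu
    have := (aux_models_box F hS5).mp hmodels π (hsub hπ)
    exact (aux_psat F hS5 ψ hpiPi).mpr this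

end Aux

/-- if the S5 standpoint structure `F` is a model of `T`, then the partition
`(Φ, Ψ)` of `Sub□(T)` with `Ψ := {□_u φ ∈ Sub□(T) : F ⊩ □_u φ}` and `Φ := Sub□(T) \ Ψ`
satisfies (C1) and (C2); in particular such a partition exists. -/
theorem model_gives_partition_C1_C2 {A S P : Type} (star : S) (T : Set (SExpr A S))
    (F : SFFS A S P star) (hS5 : F.IsS5) (hmod : F.isModel T) :
    (C1 star T (SubBox T \ {χ ∈ SubBox T | F.models χ}) {χ ∈ SubBox T | F.models χ} ∧
     C2 star T (SubBox T \ {χ ∈ SubBox T | F.models χ}) {χ ∈ SubBox T | F.models χ}) ∧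
    (∃ Φ Ψ : Set (SForm A S), Φ ∪ Ψ = SubBox T ∧ Disjoint Φ Ψ ∧
       C1 star T Φ Ψ ∧ C2 star T Φ Ψ) := by
  set Ψ : Set (SForm A S) := {χ ∈ SubBox T | F.models χ} with hΨ
  set Φ : Set (SForm A S) := SubBox T \ Ψ with hΦ
  have hC1 : C1 star T Φ Ψ := by
    intro s
    obtain ⟨π, hπ⟩ := F.sig_nonempty s
    exact ⟨F.val π, {χ | F.models χ},
      {p | F.sig p.1 ⊆ F.sig p.2 ∧ F.tau p.1 ⊆ F.tau p.2},
      aux_theta F hS5 hmod s hπ⟩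
  have hC2 : C2 star T Φ Ψ := by
    intro s u φ hφ hus
    have hnm : ¬ F.models (SForm.box u φ) := fun h => hφ.2 ⟨hφ.1, h⟩
    rw [aux_models_box F hS5] at hnm
    push_neg at hnm
    obtain ⟨π, hπu, hnsat⟩ := hnm
    have hπs : π ∈ F.sig s := aux_sharp_sub F hS5 hmod hus hπu
    refine ⟨F.val π, {χ | F.models χ},
      {p | F.sig p.1 ⊆ F.sig p.2 ∧ F.tau p.1 ⊆ F.tau p.2},
      aux_theta F hS5 hmod s hπs, ?_⟩
    show ¬ psat (F.val π) {χ | F.models χ} φ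
    rw [aux_psat F hS5 φ (F.sig_sub u hπu)]
    exact hnsat
  refine ⟨⟨hC1, hC2⟩, Φ, Ψ, ?_, ?_, hC1, hC2⟩
  · rw [hΦ]
    exact Set.diff_union_of_subset (fun χ hχ => hχ.1)
  · exact Set.disjoint_sdiff_left
end
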